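/- arXiv:1611.03809 — 4 statements merged into one kernel-verified Lean document; each statement's English description precedes it below -/
import Mathlib

section
/- Let p be an odd prime such that -1 is not a power of 2 modulo p. Then there exists a function f from ordered pairs of distinct elements of Z/pZ to {0,1} such that for all distinct x, y: f(x,y) ≠ f(y,x) and f(x,y) ≠ f((x+y)/2, x), where (x+y)/2 denotes division by 2 in Z/pZ and the second condition is required whenever (x+y)/2 ≠ x (which holds since x ≠ y). -/
theorem aux_coloring {G : Type*} [CommGroup G] (m : G) (hm1 : m ≠ 1) (hm2 : m * m = 1) :
    ∃ g : G → Fin 2, ∀ q : G, g q ≠ g (m * q) := by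
  classical
  set K : Subgroup G := Subgroup.zpowers m with hK
  have hKmem : ∀ k ∈ K, k = 1 ∨ k = m := by
    intro k hk
    obtain ⟨j, hj⟩ := Subgroup.mem_zpowers_iff.mp hk
    rcases Int.even_or_odd j with ⟨c, hc⟩ | ⟨c, hc⟩
    · left
      rw [← hj, hc, zpow_add, ← mul_zpow, hm2, one_zpow]
    · right
      rw [← hj, hc, zpow_add, zpow_one, two_mul, zpow_add, ← mul_zpow, hm2, one_zpow, one_mul]
  have hmK : (QuotientGroup.mk m : G ⧸ K) = 1 :=
    (QuotientGroup.eq_one_iff m).mpr (Subgroup.mem_zpowers m)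
  have hmk : ∀ q : G, (QuotientGroup.mk (m * q) : G ⧸ K) = QuotientGroup.mk q := by
    intro q
    rw [QuotientGroup.mk_mul, hmK, one_mul]
  have hmq : ∀ q : G, m * q ≠ q := by
    intro q h
    exact hm1 (mul_right_cancel (h.trans (one_mul q).symm))
  refine ⟨fun q => if q = ((QuotientGroup.mk q : G ⧸ K)).out then 0 else 1, ?_⟩
  intro q
  show (if q = ((QuotientGroup.mk q : G ⧸ K)).out then (0 : Fin 2) else 1) ≠
    (if m * q = ((QuotientGroup.mk (m * q) : G ⧸ K)).out then (0 : Fin 2) else 1)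
  by_cases hq : q = ((QuotientGroup.mk q : G ⧸ K)).out
  · have h2 : m * q ≠ ((QuotientGroup.mk (m * q) : G ⧸ K)).out := by
      rw [hmk, ← hq]
      exact hmq q
    rw [if_pos hq, if_neg h2]
    decide
  · have hout : (QuotientGroup.mk (((QuotientGroup.mk q : G ⧸ K)).out) : G ⧸ K) =
        QuotientGroup.mk q := QuotientGroup.out_eq' _
    have hrel : (((QuotientGroup.mk q : G ⧸ K)).out)⁻¹ * q ∈ K :=
      QuotientGroup.eq.mp hout
    rcases hKmem _ hrel with h1 | h1
    · exact absurd (inv_mul_eq_one.mp h1).symm hq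
    · have hmqo : m * q = ((QuotientGroup.mk (m * q) : G ⧸ K)).out := by
        have h3 : q = ((QuotientGroup.mk q : G ⧸ K)).out * m := by
          rw [← h1, mul_inv_cancel_left]
        rw [hmk]
        conv_lhs => rw [h3]
        rw [mul_left_comm, hm2, mul_one]
      rw [if_neg hq, if_pos hmqo]
      decide

theorem exists_orientation_function (p : ℕ) [hp : Fact p.Prime] (hodd : p ≠ 2)
    (h2 : ∀ r : ℕ, (2 : ZMod p) ^ r ≠ -1) :
    ∃ f : ZMod p → ZMod p → Fin 2,
      ∀ x y : ZMod p, x ≠ y → f x y ≠ f y x ∧ f x y ≠ f ((x + y) / 2) x := by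
  classical
  have hp2 : p.Prime := hp.out
  have h2ne : (2 : ZMod p) ≠ 0 := by
    have : ((2 : ℕ) : ZMod p) ≠ 0 := by
      rw [Ne, ZMod.natCast_eq_zero_iff]
      intro h
      exact hodd ((Nat.prime_dvd_prime_iff_eq hp2 Nat.prime_two).mp h)
    simpa using this
  set u : (ZMod p)ˣ := Units.mk0 2 h2ne with hu
  set H : Subgroup (ZMod p)ˣ := Subgroup.zpowers u with hH
  set m : (ZMod p)ˣ ⧸ H := QuotientGroup.mk (-1) with hm
  have keyn : ∀ n : ℕ, u ^ n ≠ -1 := by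
    intro n hn
    apply h2 n
    have := congrArg (Units.val) hn
    simpa [hu] using this
  have hm1 : m ≠ 1 := by
    rw [hm, Ne, QuotientGroup.eq_one_iff]
    intro hmem
    obtain ⟨k, hk⟩ := Subgroup.mem_zpowers_iff.mp hmem
    obtain ⟨n, rfl | rfl⟩ := k.eq_nat_or_neg
    · exact keyn n (by simpa using hk)
    · have h1 : (u ^ n)⁻¹ = -1 := by
        simpa [zpow_neg, zpow_natCast] using hk
      have h3 : u ^ n = -1 := by
        rw [inv_eq_iff_eq_inv] at h1
        simpa using h1
      exact keyn n h3
  have hm2 : m * m = 1 := by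
    rw [hm, ← QuotientGroup.mk_mul]
    simp
  obtain ⟨g, hg⟩ := aux_coloring m hm1 hm2
  have huH : (QuotientGroup.mk u : (ZMod p)ˣ ⧸ H) = 1 :=
    (QuotientGroup.eq_one_iff u).mpr (Subgroup.mem_zpowers u)
  have hinv : (QuotientGroup.mk u⁻¹ : (ZMod p)ˣ ⧸ H) = 1 := by
    rw [QuotientGroup.mk_inv, huH, inv_one]
  refine ⟨fun x y => if h : y - x = 0 then 0 else
      g (QuotientGroup.mk (Units.mk0 (y - x) h)), ?_⟩
  intro x y hxy
  have hd : y - x ≠ 0 := sub_ne_zero_of_ne (Ne.symm hxy)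
  have hd' : x - y ≠ 0 := sub_ne_zero_of_ne hxy
  have hmk0neg : Units.mk0 (x - y) hd' = (-1) * Units.mk0 (y - x) hd := by
    ext
    simp only [Units.val_mul, Units.val_neg, Units.val_one, Units.val_mk0]
    ring
  constructor
  · simp only [dif_neg hd, dif_neg hd']
    rw [hmk0neg, QuotientGroup.mk_mul]
    exact hg _
  · have hz : x - (x + y) / 2 = (x - y) / 2 := by
      rw [eq_div_iff h2ne, sub_mul, div_mul_cancel₀ _ h2ne]
      ring
    have hz0 : x - (x + y) / 2 ≠ 0 := by
      rw [hz]
      exact div_ne_zero hd' h2ne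
    have hmk0half : Units.mk0 (x - (x + y) / 2) hz0 = Units.mk0 (x - y) hd' * u⁻¹ := by
      ext
      rw [Units.val_mul, Units.val_inv_eq_inv_val]
      simp only [Units.val_mk0, hu]
      rw [← div_eq_mul_inv]
      exact hz
    simp only [dif_neg hd, dif_neg hz0]
    have hdrop : (QuotientGroup.mk (Units.mk0 (x - y) hd' * u⁻¹) : (ZMod p)ˣ ⧸ H) =
        QuotientGroup.mk (Units.mk0 (x - y) hd') := by
      exact QuotientGroup.mk_mul_of_mem _ (Subgroup.inv_mem _ (Subgroup.mem_zpowers u))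
    rw [hmk0half, hdrop, hmk0neg, QuotientGroup.mk_mul]
    exact hg _
end

section
/- Let p be an odd prime with -1 not a power of 2 modulo p. Define a graph G whose vertices are ordered pairs (x,y) of distinct elements of Z/pZ, where (x,y) is adjacent to (y,x), to ((x+y)/2, x), and to (y, 2x - y). Then G is bipartite. -/
/-!
Along every edge the difference `x - y` of a vertex `(x, y)` is multiplied by `-1`, `-1/2` or `-2`,
that is, by `-1` times a power of `2`. By hypothesis `-1` is not a power of `2`, so in the quotient
of `(ZMod p)ˣ` by the powers of `2` multiplication by `-1` is a fixed-point-free involution;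
coloring one class of each orbit `{q, -q}` by `true` and the other by `false` gives the
2-coloring.
-/

def pairGraph (p : ℕ) [Fact p.Prime] :
    SimpleGraph {v : ZMod p × ZMod p // v.1 ≠ v.2} :=
  SimpleGraph.fromRel (fun u v =>
    v.val = (u.val.2, u.val.1) ∨
    v.val = ((u.val.1 + u.val.2) / 2, u.val.1) ∨
    v.val = (u.val.2, 2 * u.val.1 - u.val.2))

theorem Function.Involutive.exists_bool_ne {α : Type*} {φ : α → α}
    (hφ : Function.Involutive φ) (hfix : ∀ a, φ a ≠ a) :
    ∃ f : α → Bool, ∀ a, f (φ a) ≠ f a := by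
  -- a linear order selects the smaller element of each orbit `{a, φ a}`
  let : LinearOrder α := WellOrderingRel.isWellOrder.linearOrder
  refine ⟨fun a => decide (a < φ a), fun a => ?_⟩
  dsimp only
  rw [hφ a]
  rcases (hfix a).lt_or_gt with h | h
  · simp [h, h.not_gt]
  · simp [h, h.not_gt]

theorem Subgroup.exists_bool_ne_mul_mul_of_notMem {G : Type*} [Group G] {H : Subgroup G}
    [H.Normal] {ε : G} (hε : ε ^ 2 = 1) (hεH : ε ∉ H) :
    ∃ f : G → Bool, ∀ g, ∀ h ∈ H, f (ε * h * g) ≠ f g := by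
  have hinv : Function.Involutive ((ε : G ⧸ H) * ·) := fun q => by
    dsimp only
    rw [← mul_assoc, ← QuotientGroup.mk_mul, ← pow_two, hε, QuotientGroup.mk_one, one_mul]
  obtain ⟨f, hf⟩ := hinv.exists_bool_ne fun q hq =>
    hεH <| (QuotientGroup.eq_one_iff ε).1 (mul_eq_right.1 hq)
  refine ⟨fun g => f g, fun g h hh => ?_⟩
  simpa [(QuotientGroup.eq_one_iff h).2 hh] using hf g

theorem Subgroup.notMem_zpowers_of_inv_eq {G : Type*} [Group G] {g a : G} (ha : a⁻¹ = a)
    (h : ∀ n : ℕ, g ^ n ≠ a) : a ∉ Subgroup.zpowers g := by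
  rintro ⟨k, hk⟩
  obtain ⟨n, rfl | rfl⟩ := Int.eq_nat_or_neg k
  · exact h n (by simpa using hk)
  · exact h n (by rw [← ha, ← hk]; simp)

section Field

variable {K : Type*} [Field K]

theorem exists_sub_eq_neg_two_zpow_mul_sub (h2 : (2 : K) ≠ 0) {x y : K} {w : K × K}
    (h : w = (y, x) ∨ w = ((x + y) / 2, x) ∨ w = (y, 2 * x - y)) :
    ∃ k : ℤ, w.1 - w.2 = -2 ^ k * (x - y) := by
  rcases h with rfl | rfl | rfl
  · exact ⟨0, by ring⟩
  · exact ⟨-1, by field_simp; ring⟩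
  · exact ⟨1, by ring⟩

def pairDiff (v : {v : K × K // v.1 ≠ v.2}) : Kˣ :=
  Units.mk0 (v.1.1 - v.1.2) (sub_ne_zero.2 v.2)

end Field

theorem pairGraph_adj_exists_pairDiff_eq {p : ℕ} [Fact p.Prime] (h2 : (2 : ZMod p) ≠ 0)
    {u v : {v : ZMod p × ZMod p // v.1 ≠ v.2}} (huv : (pairGraph p).Adj u v) :
    ∃ k : ℤ, pairDiff v = -1 * Units.mk0 2 h2 ^ k * pairDiff u := by
  have step : ∀ a b : {v : ZMod p × ZMod p // v.1 ≠ v.2},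
      (b.val = (a.val.2, a.val.1) ∨ b.val = ((a.val.1 + a.val.2) / 2, a.val.1) ∨
        b.val = (a.val.2, 2 * a.val.1 - a.val.2)) →
      ∃ k : ℤ, pairDiff b = -1 * Units.mk0 2 h2 ^ k * pairDiff a := fun a b hab =>
    (exists_sub_eq_neg_two_zpow_mul_sub h2 hab).imp fun k hk =>
      Units.ext (by simpa [pairDiff] using hk)
  obtain ⟨-, h | h⟩ := (SimpleGraph.fromRel_adj _ _ _).1 huv
  · exact step u v h
  · obtain ⟨k, hk⟩ := step v u h
    refine ⟨-k, ?_⟩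
    rw [hk, zpow_neg]
    simp [mul_left_comm]

theorem pairGraph_bipartite_general (p : ℕ) [hp : Fact p.Prime]
    (h2 : ∀ r : ℕ, (2 : ZMod p) ^ r ≠ -1) :
    (pairGraph p).Colorable 2 := by
  have h2ne : (2 : ZMod p) ≠ 0 := fun h => h2 0 (by linear_combination h)
  have hneg : (-1 : (ZMod p)ˣ) ∉ Subgroup.zpowers (Units.mk0 2 h2ne) :=
    Subgroup.notMem_zpowers_of_inv_eq (by simp) fun n hn =>
      h2 n (by simpa using congrArg Units.val hn)
  obtain ⟨f, hf⟩ := Subgroup.exists_bool_ne_mul_mul_of_notMem (by simp) hneg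
  refine (SimpleGraph.Coloring.mk (fun v => f (pairDiff v)) fun {u v} huv => ?_).colorable
  obtain ⟨k, hk⟩ := pairGraph_adj_exists_pairDiff_eq h2ne huv
  rw [hk]
  exact (hf _ _ (Subgroup.zpow_mem_zpowers _ k)).symm

theorem pairGraph_bipartite (p : ℕ) [hp : Fact p.Prime] (hodd : p ≠ 2)
    (h2 : ∀ r : ℕ, (2 : ZMod p) ^ r ≠ -1) :
    (pairGraph p).Colorable 2 :=
  pairGraph_bipartite_general p (hp := hp) h2
end

section
/- Let p = 8k - 1 be prime. Then the 3-element subsets of {1, ..., p+2} can be colored with p colors so that any two 3-element subsets whose intersection has exactly 2 elements receive different colors. -/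
/-!
Take the vertex set `𝔽_p ⊔ {∞₀, ∞₁}` with `p ≡ 7 (mod 8)`, so that `-1` is a non-square and `2` is
a square. For `u ≠ v` exactly one of `u - v`, `v - u` is a square, which orients every pair (the
Paley tournament); write `max(u, v)` for the winner and `min(u, v)` for the loser. Colour
`{a, u, v}` by `a + u + v`, `{∞₀, u, v}` by `u + v + max(u, v)`, `{∞₁, u, v}` by
`u + v + min(u, v)` and `{∞₀, ∞₁, u}` by `3u`. Two triples sharing a pair `e` get different
colours: for `e = {u, v}` the colours are `u + v` plus `a ∉ {u, v}`, `max` or `min`; for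
`e = {u, ∞₀}` they are `3u + φ(a - u)` with `φ(d) = 2d` on squares and `φ(d) = d` on non-squares
(`d = 0` standing for `∞₁`), and `φ` is injective because `2` is a square; `e = {u, ∞₁}` is the
same with the roles of `1` and `2` exchanged, and for `e = {∞₀, ∞₁}` the colours `3a` are
distinct since `3 ≠ 0`.
-/

open Finset Function Sum

variable {α α' β γ : Type*}

/-- A proper colouring of the Johnson graph `J(α, 3)`; the values off 3-sets are irrelevant. -/
def IsJohnsonColoring [DecidableEq α] (c : Finset α → β) : Prop :=
  ∀ x y : Finset α, #x = 3 → #y = 3 → #(x ∩ y) = 2 → c x ≠ c y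

theorem Finset.exists_notMem_eq_insert_inter [DecidableEq α] {s t : Finset α}
    (h : #(s ∩ t) + 1 = #s) : ∃ a ∉ t, s = insert a (s ∩ t) := by
  obtain ⟨a, ha⟩ : ∃ a, s \ t = {a} :=
    card_eq_one.1 (by have := card_sdiff_add_card_inter s t; omega)
  refine ⟨a, (mem_sdiff.1 (ha ▸ mem_singleton_self a)).2, ?_⟩
  rw [insert_eq, ← ha, sdiff_union_inter]

namespace IsJohnsonColoring

theorem of_injOn [DecidableEq α] {c : Finset α → β}
    (h : ∀ e : Finset α, #e = 2 → Set.InjOn (fun a ↦ c (insert a e)) (↑e)ᶜ) :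
    IsJohnsonColoring c := by
  intro x y hx hy hxy hc
  obtain ⟨a, hay, hxa⟩ := exists_notMem_eq_insert_inter (s := x) (t := y) (by omega)
  obtain ⟨b, hbx, hyb⟩ :=
    exists_notMem_eq_insert_inter (s := y) (t := x) (by rw [inter_comm]; omega)
  rw [inter_comm] at hyb
  have hab : a = b := h (x ∩ y) hxy (by simp [hay]) (by simp [hbx]) (by simpa only [← hxa, ← hyb])
  exact hay (hab ▸ hyb ▸ mem_insert_self b _)

theorem comp [DecidableEq α] {c : Finset α → β} (hc : IsJohnsonColoring c) {f : β → γ}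
    (hf : Injective f) : IsJohnsonColoring (f ∘ c) :=
  fun x y hx hy hxy h ↦ hc x y hx hy hxy (hf h)

theorem map_equiv [DecidableEq α] [DecidableEq α'] {c : Finset α → β} (hc : IsJohnsonColoring c)
    (e : α ≃ α') : IsJohnsonColoring fun x : Finset α' ↦ c (x.map e.symm.toEmbedding) := by
  intro x y hx hy hxy
  apply hc <;> simp [← map_inter, hx, hy, hxy]

end IsJohnsonColoring

@[simp] theorem Finset.toLeft_singleton_inl {α β : Type*} (a : α) :
    ({inl a} : Finset (α ⊕ β)).toLeft = {a} := by ext; simp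

@[simp] theorem Finset.toLeft_singleton_inr {α β : Type*} (b : β) :
    ({inr b} : Finset (α ⊕ β)).toLeft = ∅ := by ext; simp

section Paley

variable {F : Type*} [Field F]

theorem ite_isSquare_mul_injective [DecidablePred (IsSquare : F → Prop)] {r s : F}
    (hr : IsSquare r) (hs : IsSquare s) (hr0 : r ≠ 0) (hs0 : s ≠ 0) :
    Injective fun d : F ↦ if IsSquare d then r * d else s * d := by
  have key : ∀ {d d'}, IsSquare d → ¬IsSquare d' → r * d ≠ s * d' := by
    intro d d' hd hd' h
    apply hd'
    have : d' = r / s * d := by field_simp; linear_combination -h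
    exact this ▸ (hr.div hs).mul hd
  intro d d' h
  by_cases hd : IsSquare d <;> by_cases hd' : IsSquare d' <;>
    simp only [hd, hd', if_true, if_false] at h
  · exact mul_left_cancel₀ hr0 h
  · exact absurd h (key hd hd')
  · exact absurd h.symm (key hd' hd)
  · exact mul_left_cancel₀ hs0 h

theorem two_ne_zero_of_not_isSquare_neg_one (hF : ¬IsSquare (-1 : F)) : (2 : F) ≠ 0 := by
  intro h
  exact hF (by rw [show (-1 : F) = 1 by linear_combination -h]; exact IsSquare.one)

theorem three_ne_zero_of_not_isSquare_neg_one (hF : ¬IsSquare (-1 : F)) (h2 : IsSquare (2 : F)) :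
    (3 : F) ≠ 0 := by
  intro h
  exact hF (by rwa [show (-1 : F) = 2 by linear_combination -h])

variable [Fintype F] [DecidableEq F]

theorem isSquare_neg_iff_not_isSquare (hF : ¬IsSquare (-1 : F)) {d : F} (hd : d ≠ 0) :
    IsSquare (-d) ↔ ¬IsSquare d := by
  rw [← quadraticChar_one_iff_isSquare (neg_ne_zero.2 hd), ← quadraticChar_neg_one_iff_not_isSquare,
    neg_eq_neg_one_mul, map_mul, quadraticChar_neg_one_iff_not_isSquare.2 hF, neg_one_mul,
    neg_eq_iff_eq_neg]

open scoped Classical in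
noncomputable def paleyMax (S : Finset F) : Finset F := {a ∈ S | ∀ b ∈ S, IsSquare (a - b)}

open scoped Classical in
noncomputable def paleyMin (S : Finset F) : Finset F := {a ∈ S | ∀ b ∈ S, IsSquare (b - a)}

@[simp] theorem paleyMax_singleton (u : F) : paleyMax {u} = {u} := by
  simp [paleyMax, filter_singleton]

@[simp] theorem paleyMin_singleton (u : F) : paleyMin {u} = {u} := by
  simp [paleyMin, filter_singleton]

theorem isSquare_sub_comm_iff (hF : ¬IsSquare (-1 : F)) {u v : F} (huv : u ≠ v) :
    IsSquare (v - u) ↔ ¬IsSquare (u - v) := by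
  rw [← neg_sub, isSquare_neg_iff_not_isSquare hF (sub_ne_zero.2 huv)]

theorem paleyMax_pair (hF : ¬IsSquare (-1 : F)) {u v : F} (huv : u ≠ v) :
    paleyMax {u, v} = if IsSquare (u - v) then {u} else {v} := by
  split_ifs with h <;> simp [paleyMax, filter_insert, filter_singleton, isSquare_sub_comm_iff hF huv, h]

theorem paleyMin_pair (hF : ¬IsSquare (-1 : F)) {u v : F} (huv : u ≠ v) :
    paleyMin {u, v} = if IsSquare (u - v) then {v} else {u} := by
  split_ifs with h <;> simp [paleyMin, filter_insert, filter_singleton, isSquare_sub_comm_iff hF huv, h]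

/-- `inr false` and `inr true` are the points `∞₀` and `∞₁`. -/
noncomputable def paleyColor (T : Finset (F ⊕ Bool)) : F :=
  ∑ a ∈ T.toLeft, a + (if false ∈ T.toRight then ∑ a ∈ paleyMax T.toLeft, a else 0)
    + (if true ∈ T.toRight then ∑ a ∈ paleyMin T.toLeft, a else 0)

theorem paleyColor_injOn_inl_inl (hF : ¬IsSquare (-1 : F)) {u v : F} (huv : u ≠ v) :
    Set.InjOn (fun x : F ⊕ Bool ↦ paleyColor (insert x {inl u, inl v}))
      (↑({inl u, inl v} : Finset (F ⊕ Bool)))ᶜ := by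
  rintro (a | _ | _) ha (b | _ | _) hb hab <;> simp at ha hb <;>
    simp [paleyColor, ha, hb, huv, paleyMax_pair hF huv, paleyMin_pair hF huv,
      apply_ite (fun s : Finset F ↦ ∑ x ∈ s, x)] at hab ⊢ <;> grind

theorem paleyColor_injOn_inl_inr (hF : ¬IsSquare (-1 : F)) (h2 : IsSquare (2 : F)) (u : F)
    (i : Bool) :
    Set.InjOn (fun x ↦ paleyColor (insert x ({inl u, inr i} : Finset (F ⊕ Bool))))
      (({inl u, inr i} : Finset (F ⊕ Bool)) : Set (F ⊕ Bool))ᶜ := by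
  set g : F ⊕ Bool → F := Sum.elim (· - u) 0
  have hg : Set.InjOn g (({inl u, inr i} : Finset (F ⊕ Bool)) : Set (F ⊕ Bool))ᶜ := by
    rintro (a | j) ha (b | j') hb h <;> simp only [g, elim_inl, elim_inr, Pi.zero_apply] at h
    · simpa using h
    · simp_all [sub_eq_zero]
    · simp_all [eq_comm (a := (0 : F)), sub_eq_zero]
    · cases j <;> cases j' <;> simp_all
  suffices ∃ r s : F, IsSquare r ∧ IsSquare s ∧ r ≠ 0 ∧ s ≠ 0 ∧
      Set.EqOn (fun x ↦ paleyColor (insert x ({inl u, inr i} : Finset (F ⊕ Bool))))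
        (fun x ↦ 3 * u + if IsSquare (g x) then r * g x else s * g x)
        (({inl u, inr i} : Finset (F ⊕ Bool)) : Set (F ⊕ Bool))ᶜ by
    obtain ⟨r, s, hr, hs, hr0, hs0, heq⟩ := this
    exact (((add_right_injective _).comp
      (ite_isSquare_mul_injective hr hs hr0 hs0)).comp_injOn hg).congr heq.symm
  have h20 := two_ne_zero_of_not_isSquare_neg_one hF
  cases i
  · refine ⟨2, 1, h2, IsSquare.one, h20, one_ne_zero, ?_⟩
    rintro (a | _ | _) ha <;> simp at ha
    · simp [g, paleyColor, paleyMax_pair hF ha, ha, apply_ite (fun s : Finset F ↦ ∑ x ∈ s, x)]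
      split_ifs <;> ring
    · simp [g, paleyColor]
      ring
  · refine ⟨1, 2, IsSquare.one, h2, one_ne_zero, h20, ?_⟩
    rintro (a | _ | _) ha <;> simp at ha
    · simp [g, paleyColor, paleyMin_pair hF ha, ha, apply_ite (fun s : Finset F ↦ ∑ x ∈ s, x)]
      split_ifs <;> ring
    · simp [g, paleyColor]
      ring

theorem paleyColor_inl_inr_inr (a : F) :
    paleyColor ({inl a, inr false, inr true} : Finset (F ⊕ Bool)) = 3 * a := by
  simp [paleyColor]
  ring

theorem paleyColor_injOn_inr_inr (h3 : (3 : F) ≠ 0) :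
    Set.InjOn (fun x ↦ paleyColor (insert x ({inr false, inr true} : Finset (F ⊕ Bool))))
      (({inr false, inr true} : Finset (F ⊕ Bool)) : Set (F ⊕ Bool))ᶜ := by
  rintro (a | _ | _) ha (b | _ | _) hb h <;> simp at ha hb
  simp only [paleyColor_inl_inr_inr] at h
  exact congrArg inl (mul_left_cancel₀ h3 h)

theorem isJohnsonColoring_paleyColor (hF : ¬IsSquare (-1 : F)) (h2 : IsSquare (2 : F)) :
    IsJohnsonColoring (paleyColor (F := F)) := by
  refine .of_injOn fun e he ↦ ?_
  obtain ⟨x, y, hxy, rfl⟩ := card_eq_two.1 he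
  rcases x with u | i <;> rcases y with v | j
  · exact paleyColor_injOn_inl_inl hF (by simpa using hxy)
  · exact paleyColor_injOn_inl_inr hF h2 u j
  · rw [pair_comm]
    exact paleyColor_injOn_inl_inr hF h2 v i
  · have h3 := three_ne_zero_of_not_isSquare_neg_one hF h2
    cases i <;> cases j <;> simp only [ne_eq, not_true_eq_false] at hxy
    · exact paleyColor_injOn_inr_inr h3
    · rw [pair_comm]
      exact paleyColor_injOn_inr_inr h3

end Paley

theorem coloring_exists_general (k p : ℕ) (hp8 : p = 8 * k - 1) (hp : p.Prime) :
    ∃ c : Finset (Fin (p + 2)) → Fin p,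
      ∀ x y : Finset (Fin (p + 2)), x.card = 3 → y.card = 3 →
        (x ∩ y).card = 2 → c x ≠ c y := by
  have : Fact p.Prime := ⟨hp⟩
  have : NeZero p := ⟨hp.ne_zero⟩
  have h7 : p % 8 = 7 := by have := hp.two_le; omega
  have hF : ¬IsSquare (-1 : ZMod p) := by rw [ZMod.exists_sq_eq_neg_one_iff]; omega
  have h2 : IsSquare (2 : ZMod p) := (ZMod.exists_sq_eq_two_iff (by omega)).2 (Or.inr h7)
  have hcard : Fintype.card (ZMod p ⊕ Bool) = p + 2 := by simp
  exact ⟨_, ((isJohnsonColoring_paleyColor hF h2).map_equiv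
    (Fintype.equivFinOfCardEq hcard)).comp (ZMod.finEquiv p).symm.injective⟩

theorem coloring_exists (k p : ℕ) (hk : 0 < k) (hp8 : p = 8 * k - 1) (hp : p.Prime) :
    ∃ c : Finset (Fin (p + 2)) → Fin p,
      ∀ x y : Finset (Fin (p + 2)), x.card = 3 → y.card = 3 →
        (x ∩ y).card = 2 → c x ≠ c y :=
  coloring_exists_general k p hp8 hp
end

section
/- Let p be a prime with p ≡ -1 (mod 8), and let (x₁,y₁), ..., (x_l, y_l) be a closed walk in the graph G on ordered pairs of distinct elements of Z/pZ (adjacencies: (x,y)~(y,x), ~((x+y)/2,x), ~(y,2x-y)). Then l is even. -/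
theorem SimpleGraph.Walk.even_length_of_forall_adj_eq_neg {V : Type*} {G : SimpleGraph V}
    (f : V → ℤ) (hf : ∀ v, f v ≠ 0) (hadj : ∀ ⦃a b⦄, G.Adj a b → f b = -f a) {u : V}
    (w : G.Walk u u) : Even w.length := by
  let c : G.Coloring Bool := Coloring.mk (fun v ↦ decide (0 < f v)) fun {a b} hab ↦ by
    have := hf a
    simp only [hadj hab, ne_eq, decide_eq_decide]
    omega
  exact (c.even_length_iff_congr w).2 Iff.rfl

section QuadraticChar

variable {F : Type*} [Field F] [Fintype F] [DecidableEq F]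

theorem quadraticChar_neg_one_of_card_mod_eight (hF : Fintype.card F % 8 = 7) :
    quadraticChar F (-1) = -1 :=
  quadraticChar_neg_one_iff_not_isSquare.2 <| FiniteField.isSquare_neg_one_iff.not_left.2 <| by
    omega

theorem quadraticChar_neg_two_of_card_mod_eight (hF : Fintype.card F % 8 = 7) :
    quadraticChar F (-2) = -1 :=
  quadraticChar_neg_one_iff_not_isSquare.2 <| FiniteField.isSquare_neg_two_iff.not.2 <| by
    omega

theorem quadraticChar_eq_neg_of_eq_neg_two_mul (hF : Fintype.card F % 8 = 7) {x y : F}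
    (h : y = -2 * x) : quadraticChar F y = -quadraticChar F x := by
  rw [h, map_mul, quadraticChar_neg_two_of_card_mod_eight hF, neg_one_mul]

theorem quadraticChar_eq_neg_of_eq_neg_or_neg_two_mul (hF : Fintype.card F % 8 = 7) {x y : F}
    (h : y = -x ∨ x = -2 * y ∨ y = -2 * x) : quadraticChar F y = -quadraticChar F x := by
  rcases h with h | h | h
  · rw [h, neg_eq_neg_one_mul, map_mul, quadraticChar_neg_one_of_card_mod_eight hF, neg_one_mul]
  · rw [quadraticChar_eq_neg_of_eq_neg_two_mul hF h, neg_neg]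
  · exact quadraticChar_eq_neg_of_eq_neg_two_mul hF h

end QuadraticChar

theorem sub_eq_of_pairGraph_step {F : Type*} [Field F] (h2 : (2 : F) ≠ 0) {u v : F × F}
    (h : v = (u.2, u.1) ∨ v = ((u.1 + u.2) / 2, u.1) ∨ v = (u.2, 2 * u.1 - u.2)) :
    v.1 - v.2 = -(u.1 - u.2) ∨ u.1 - u.2 = -2 * (v.1 - v.2) ∨
      v.1 - v.2 = -2 * (u.1 - u.2) := by
  rcases h with rfl | rfl | rfl
  · left; ring
  · right; left; field_simp; ring
  · right; right; ring

theorem closed_walk_even_length (p : ℕ) [hp : Fact p.Prime] (hmod : p % 8 = 7)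
    (v : {v : ZMod p × ZMod p // v.1 ≠ v.2}) (w : (pairGraph p).Walk v v) :
    Even w.length := by
  have h2 : (2 : ZMod p) ≠ 0 := Ring.two_ne_zero <| by rw [ZMod.ringChar_zmod_n]; omega
  have hcard : Fintype.card (ZMod p) % 8 = 7 := by rwa [ZMod.card]
  refine w.even_length_of_forall_adj_eq_neg (fun u ↦ quadraticChar (ZMod p) (u.1.1 - u.1.2))
    (fun u ↦ quadraticChar_eq_zero_iff.not.2 (sub_ne_zero.2 u.2)) fun a b hab ↦ ?_
  obtain ⟨-, hab | hab⟩ := SimpleGraph.fromRel_adj _ _ _ |>.1 hab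
  · exact quadraticChar_eq_neg_of_eq_neg_or_neg_two_mul hcard (sub_eq_of_pairGraph_step h2 hab)
  · exact neg_eq_iff_eq_neg.1
      (quadraticChar_eq_neg_of_eq_neg_or_neg_two_mul hcard (sub_eq_of_pairGraph_step h2 hab)).symm
end
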